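/- For positive definite symmetric matrices S and T, trace(S)·trace(T) ≥ (trace((T^{1/2} S T^{1/2})^{1/2}))², i.e. the product of traces is bounded below by the squared trace of the square root of the symmetrized product. -/

import Mathlib

open Matrix

/-- `Matrix.PosSemidef.sqrt` as defined in Mathlib (Dec 2024); it has since been removed. -/
noncomputable def Matrix.PosSemidef.sqrt {n : Type*} [Fintype n] [DecidableEq n] {𝕜 : Type*}
    [RCLike 𝕜] [PartialOrder 𝕜] {A : Matrix n n 𝕜} (hA : A.PosSemidef) : Matrix n n 𝕜 :=
  hA.1.eigenvectorUnitary.1 * diagonal ((↑) ∘ (√·) ∘ hA.1.eigenvalues) *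
    (star hA.1.eigenvectorUnitary : Matrix n n 𝕜)

lemma psd_sqrt_mul_self_aux {d : ℕ} {T : Matrix (Fin d) (Fin d) ℝ} (hT : T.PosSemidef) :
    hT.sqrt * hT.sqrt = T := by
  have hs := hT.1.spectral_theorem
  simp only [Unitary.conjStarAlgAut_apply] at hs
  have hU : (star hT.1.eigenvectorUnitary : Matrix (Fin d) (Fin d) ℝ) * hT.1.eigenvectorUnitary.1 = 1 :=
    Unitary.coe_star_mul_self _
  unfold Matrix.PosSemidef.sqrt
  conv_rhs => rw [hs]
  calc _ = hT.1.eigenvectorUnitary.1 * diagonal ((↑) ∘ (√·) ∘ hT.1.eigenvalues) *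
      ((star hT.1.eigenvectorUnitary : Matrix (Fin d) (Fin d) ℝ) * hT.1.eigenvectorUnitary.1) *
      diagonal ((↑) ∘ (√·) ∘ hT.1.eigenvalues) * (star hT.1.eigenvectorUnitary : Matrix (Fin d) (Fin d) ℝ) := by
        simp only [Matrix.mul_assoc]; rfl
    _ = _ := by
      rw [hU, Matrix.mul_one, Matrix.mul_assoc _ (diagonal _) (diagonal _), diagonal_mul_diagonal]
      congr 3
      funext i
      simp [Real.mul_self_sqrt (hT.eigenvalues_nonneg i)]

lemma psd_sqrt_transpose_aux {d : ℕ} {T : Matrix (Fin d) (Fin d) ℝ} (hT : T.PosSemidef) :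
    hT.sqrtᵀ = hT.sqrt := by
  have h := isHermitian_mul_mul_conjTranspose (A := diagonal ((↑) ∘ (√·) ∘ hT.1.eigenvalues : Fin d → ℝ))
    hT.1.eigenvectorUnitary.1 (isHermitian_diagonal _)
  unfold Matrix.PosSemidef.sqrt
  have : (star hT.1.eigenvectorUnitary : Matrix (Fin d) (Fin d) ℝ) = (hT.1.eigenvectorUnitary.1)ᴴ := rfl
  rw [this]
  exact h

lemma trace_cs_aux {d : ℕ} (X Y : Matrix (Fin d) (Fin d) ℝ) :
    (Xᵀ * Y).trace ^ 2 ≤ (Xᵀ * X).trace * (Yᵀ * Y).trace := by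
  have h1 : ∀ Z W : Matrix (Fin d) (Fin d) ℝ, (Zᵀ * W).trace
      = ∑ p : Fin d × Fin d, Z p.1 p.2 * W p.1 p.2 := by
    intro Z W
    rw [Matrix.trace, Fintype.sum_prod_type]
    simp [Matrix.diag, Matrix.mul_apply, Matrix.transpose_apply]
    rw [Finset.sum_comm]
  rw [h1, h1, h1]
  have := Finset.sum_mul_sq_le_sq_mul_sq Finset.univ
    (fun p : Fin d × Fin d => X p.1 p.2) (fun p : Fin d × Fin d => Y p.1 p.2)
  simpa [pow_two] using this

/-- For symmetric positive definite `S, T`, the product of traces is bounded below by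
the squared trace of the positive semidefinite square root of `T^{1/2} S T^{1/2}`:
`trace(S)·trace(T) ≥ (trace((T^{1/2} S T^{1/2})^{1/2}))²`. -/
theorem trace_mul_trace_ge_sq_trace_sqrt {d : ℕ} (S T : Matrix (Fin d) (Fin d) ℝ)
    (hS : S.PosDef) (hT : T.PosDef)
    (R : Matrix (Fin d) (Fin d) ℝ) (hR : R.PosSemidef)
    (hRsq : R * R = hT.posSemidef.sqrt * S * hT.posSemidef.sqrt) :
    R.trace ^ 2 ≤ S.trace * T.trace := by
  set Q := hT.posSemidef.sqrt with hQdef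
  have hQQ : Q * Q = T := psd_sqrt_mul_self_aux hT.posSemidef
  have hQsymm : Qᵀ = Q := psd_sqrt_transpose_aux hT.posSemidef
  have hRsymm : Rᵀ = R := hR.isHermitian
  have hdet : IsUnit Q.det := by
    have : Q.det * Q.det = T.det := by rw [← Matrix.det_mul, hQQ]
    have hTdet : T.det ≠ 0 := ne_of_gt hT.det_pos
    have : Q.det ≠ 0 := by
      intro h; rw [h, mul_zero] at this; exact hTdet this.symm
    exact isUnit_iff_ne_zero.mpr this
  have hQinv : Q * Q⁻¹ = 1 := Matrix.mul_nonsing_inv Q hdet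
  have hQinv' : Q⁻¹ * Q = 1 := Matrix.nonsing_inv_mul Q hdet
  have hRfac : R = Qᵀ * (Q⁻¹ * R) := by
    rw [hQsymm, ← Matrix.mul_assoc, hQinv, Matrix.one_mul]
  have key := trace_cs_aux Q (Q⁻¹ * R)
  have h2 : (Qᵀ * Q).trace = T.trace := by rw [hQsymm, hQQ]
  have h3 : ((Q⁻¹ * R)ᵀ * (Q⁻¹ * R)).trace = S.trace := by
    have hQit : (Q⁻¹)ᵀ = Q⁻¹ := by rw [Matrix.transpose_nonsing_inv, hQsymm]
    rw [Matrix.transpose_mul, hQit, hRsymm,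
      Matrix.trace_mul_comm (R * Q⁻¹) (Q⁻¹ * R)]
    have e : Q⁻¹ * R * (R * Q⁻¹) = S := by
      calc Q⁻¹ * R * (R * Q⁻¹) = Q⁻¹ * (R * R) * Q⁻¹ := by noncomm_ring
        _ = (Q⁻¹ * Q) * S * (Q * Q⁻¹) := by rw [hRsq]; noncomm_ring
        _ = S := by rw [hQinv', hQinv, Matrix.one_mul, Matrix.mul_one]
    rw [e]
  calc R.trace ^ 2 = (Qᵀ * (Q⁻¹ * R)).trace ^ 2 := by rw [← hRfac]
    _ ≤ (Qᵀ * Q).trace * ((Q⁻¹ * R)ᵀ * (Q⁻¹ * R)).trace := key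
    _ = T.trace * S.trace := by rw [h2, h3]
    _ = S.trace * T.trace := mul_comm _ _
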